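/- The count of admissible paths starting at type 𝟏 and ending at type 𝟑 satisfies: N(𝟑, a₁…a_n) is comparable to q_n when a₁ ≥ 2, and comparable to q_n/a₂ when a₁ = 1 (for n ≥ 3), with absolute implied constants. Here N(𝟑, a₁…a_n) := v_𝟑 Â_{a₁}⋯Â_{a_n}(1,1,1)ᵀ. -/

import Mathlib

/-- `Â_k` is the 3×3 matrix with rows `(0,1,0)`, `(k+1,0,k)`, `(k,0,k−1)`. -/
def Ahat (k : ℕ) : Matrix (Fin 3) (Fin 3) ℤ :=
  !![0, 1, 0; (k : ℤ) + 1, 0, (k : ℤ); (k : ℤ), 0, (k : ℤ) - 1]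

/-- `N(𝐭, a₁…a_n) = v_𝐭 Â_{a₁} ⋯ Â_{a_n} (1,1,1)ᵀ` (`𝐭 = 0,1,2` for types 𝟏, 𝟐, 𝟑). -/
def pathCount (t : Fin 3) (l : List ℕ) : ℤ :=
  ((l.map Ahat).prod.mulVec fun _ => 1) t

/-- Continued fraction denominators: `q₀ = 1`, `q₁ = a₁`,
`q_{j+1} = a_{j+1} q_j + q_{j-1}` (here `a 0 = a₁`, `a 1 = a₂`, ...). -/
def cfDenom (a : ℕ → ℕ) : ℕ → ℕ
  | 0 => 1
  | 1 => a 0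
  | n + 2 => a (n + 1) * cfDenom a (n + 1) + cfDenom a n

/-!
Peeling off `Â_{a₁}` and inducting on the length of the word shows that
`Â_{a₁} ⋯ Â_{aₙ} (1,1,1)ᵀ = (2p + ε, 2qₙ − ε, 2(qₙ − p) − ε)` with `ε = (-1)ⁿ` and
`p = K(a₂,…,aₙ)` the continuant of the tail. Since `qₙ = a₁ p + K(a₃,…,aₙ)`, the count
`N(𝟑) = 2((a₁ − 1) p + K(a₃,…,aₙ)) − ε` is between `qₙ` and `3qₙ` when `a₁ ≥ 2`. When `a₁ = 1`
it collapses to `2 K(a₃,…,aₙ) − ε`, while `qₙ = p + K(a₃,…,aₙ)` and `p` is between `a₂ K(a₃,…,aₙ)`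
and `(a₂ + 1) K(a₃,…,aₙ)`.
-/

theorem cfDenom_add_two_eq_head_mul_tail (a : ℕ → ℕ) (n : ℕ) :
    cfDenom a (n + 2) = a 0 * cfDenom (fun i => a (i + 1)) (n + 1) +
      cfDenom (fun i => a (i + 2)) n := by
  induction n using Nat.twoStepInduction with
  | zero => simp only [cfDenom]; ring
  | one => simp only [cfDenom]; ring
  | more n ih₀ ih₁ =>
    set b := fun i => a (i + 1)
    set c := fun i => a (i + 2)
    calc cfDenom a (n + 4) = a (n + 3) * cfDenom a (n + 3) + cfDenom a (n + 2) := rfl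
      _ = a (n + 3) * (a 0 * cfDenom b (n + 2) + cfDenom c (n + 1)) +
          (a 0 * cfDenom b (n + 1) + cfDenom c n) := by rw [ih₀, ← ih₁]
      _ = a 0 * (a (n + 3) * cfDenom b (n + 2) + cfDenom b (n + 1)) +
          (a (n + 3) * cfDenom c (n + 1) + cfDenom c n) := by ring

theorem cfDenom_pos {a : ℕ → ℕ} (ha : ∀ i, 1 ≤ a i) (n : ℕ) : 0 < cfDenom a n := by
  induction n using Nat.twoStepInduction with
  | zero => simp [cfDenom]
  | one => exact ha 0
  | more n ih₀ _ => rw [cfDenom]; positivity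

theorem head_mul_cfDenom_tail_le (a : ℕ → ℕ) (n : ℕ) :
    a 0 * cfDenom (fun i => a (i + 1)) n ≤ cfDenom a (n + 1) := by
  cases n with
  | zero => simp [cfDenom]
  | succ n => rw [cfDenom_add_two_eq_head_mul_tail]; omega

theorem cfDenom_tail_le {a : ℕ → ℕ} (ha : 1 ≤ a 0) (n : ℕ) :
    cfDenom (fun i => a (i + 1)) n ≤ cfDenom a (n + 1) :=
  (Nat.le_mul_of_pos_left _ ha).trans (head_mul_cfDenom_tail_le a n)

theorem cfDenom_le_succ_head_mul {a : ℕ → ℕ} (ha : 1 ≤ a 1) (n : ℕ) :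
    cfDenom a (n + 1) ≤ (a 0 + 1) * cfDenom (fun i => a (i + 1)) n := by
  cases n with
  | zero => simp [cfDenom]
  | succ n =>
    have htail := cfDenom_tail_le (a := fun i => a (i + 1)) ha n
    rw [cfDenom_add_two_eq_head_mul_tail]
    nlinarith

theorem Ahat_mulVec (k : ℕ) (x y z : ℤ) :
    (Ahat k).mulVec ![x, y, z] = ![y, (k + 1) * x + k * z, k * x + (k - 1) * z] := by
  ext i
  fin_cases i <;> simp [Ahat, Matrix.mulVec]

theorem pathCount_nil : (fun t => pathCount t []) = ![1, 1, 1] := by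
  ext t
  fin_cases t <;> simp [pathCount]

theorem pathCount_cons (k : ℕ) (l : List ℕ) :
    (fun t => pathCount t (k :: l)) = (Ahat k).mulVec fun t => pathCount t l := by
  funext t
  simp [pathCount]

theorem pathCount_range_succ (a : ℕ → ℕ) (n : ℕ) :
    (fun t => pathCount t ((List.range (n + 1)).map a)) =
      ![(2 * cfDenom (fun i => a (i + 1)) n + (-1) ^ (n + 1) : ℤ),
        2 * cfDenom a (n + 1) - (-1) ^ (n + 1),
        2 * ((cfDenom a (n + 1) : ℤ) - cfDenom (fun i => a (i + 1)) n) - (-1) ^ (n + 1)] := by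
  induction n generalizing a with
  | zero =>
    rw [List.range_one, List.map_singleton, pathCount_cons, pathCount_nil, Ahat_mulVec]
    exact Matrix.vec3_eq (by simp [cfDenom]) (by push_cast [cfDenom]; ring) (by push_cast [cfDenom]; ring)
  | succ n ih =>
    rw [List.range_succ_eq_map, List.map_cons, List.map_map, Function.comp_def, pathCount_cons,
      ih, Ahat_mulVec, cfDenom_add_two_eq_head_mul_tail]
    exact Matrix.vec3_eq (by ring) (by push_cast; ring) (by push_cast; ring)

theorem pathCount_two_range_succ (a : ℕ → ℕ) (n : ℕ) :
    pathCount 2 ((List.range (n + 1)).map a) =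
      2 * ((cfDenom a (n + 1) : ℤ) - cfDenom (fun i => a (i + 1)) n) - (-1) ^ (n + 1) :=
  congrFun (pathCount_range_succ a n) 2

theorem pathCount_two_bounds_of_two_le_head {a : ℕ → ℕ} (ha : ∀ i, 1 ≤ a i) (ha0 : 2 ≤ a 0)
    (n : ℕ) :
    (cfDenom a (n + 2) : ℤ) ≤ pathCount 2 ((List.range (n + 2)).map a) ∧
      pathCount 2 ((List.range (n + 2)).map a) ≤ 3 * cfDenom a (n + 2) := by
  have hc : 1 ≤ cfDenom (fun i => a (i + 2)) n := cfDenom_pos (fun i => ha (i + 2)) n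
  rw [pathCount_two_range_succ, cfDenom_add_two_eq_head_mul_tail]
  push_cast
  rcases neg_one_pow_eq_or ℤ (n + 1 + 1) with h | h <;> rw [h] <;> constructor <;> nlinarith

theorem pathCount_two_bounds_of_head_eq_one {a : ℕ → ℕ} (ha : ∀ i, 1 ≤ a i) (ha0 : a 0 = 1)
    (n : ℕ) :
    (cfDenom a (n + 3) : ℤ) ≤ 3 * a 1 * pathCount 2 ((List.range (n + 3)).map a) ∧
      a 1 * pathCount 2 ((List.range (n + 3)).map a) ≤ 3 * cfDenom a (n + 3) := by
  have hc : 1 ≤ cfDenom (fun i => a (i + 2)) (n + 1) := cfDenom_pos (fun i => ha (i + 2)) _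
  have hlo : a 1 * cfDenom (fun i => a (i + 2)) (n + 1) ≤ cfDenom (fun i => a (i + 1)) (n + 2) :=
    head_mul_cfDenom_tail_le (fun i => a (i + 1)) (n + 1)
  have hhi : cfDenom (fun i => a (i + 1)) (n + 2) ≤
      (a 1 + 1) * cfDenom (fun i => a (i + 2)) (n + 1) :=
    cfDenom_le_succ_head_mul (a := fun i => a (i + 1)) (ha 2) (n + 1)
  have ha1 := ha 1
  rw [pathCount_two_range_succ, cfDenom_add_two_eq_head_mul_tail, ha0]
  zify at hc hlo hhi ha1
  push_cast
  rcases neg_one_pow_eq_or ℤ (n + 2 + 1) with h | h <;> rw [h] <;> constructor <;> nlinarith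

/-- With absolute implied constants: for `n ≥ 3`, `N(𝟑, a₁…a_n)` is comparable to
`qₙ` when `a₁ ≥ 2` and comparable to `qₙ/a₂` when `a₁ = 1`. -/
theorem pathCount_three_comparable :
    ∃ c C : ℝ, 0 < c ∧ c < C ∧ ∀ n : ℕ, 3 ≤ n → ∀ a : ℕ → ℕ, (∀ i, 1 ≤ a i) →
      (2 ≤ a 0 →
        c * (cfDenom a n : ℝ) ≤ (pathCount 2 ((List.range n).map a) : ℝ) ∧
          (pathCount 2 ((List.range n).map a) : ℝ) ≤ C * (cfDenom a n : ℝ)) ∧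
      (a 0 = 1 →
        c * (cfDenom a n : ℝ) / (a 1 : ℝ) ≤ (pathCount 2 ((List.range n).map a) : ℝ) ∧
          (pathCount 2 ((List.range n).map a) : ℝ) ≤ C * (cfDenom a n : ℝ) / (a 1 : ℝ)) := by
  refine ⟨1 / 3, 3, by norm_num, by norm_num, fun n hn a ha => ?_⟩
  obtain ⟨m, rfl⟩ : ∃ m, n = m + 3 := ⟨n - 3, by omega⟩
  have ha1 : (0 : ℝ) < a 1 := by exact_mod_cast ha 1
  set P := pathCount 2 ((List.range (m + 3)).map a)
  refine ⟨fun ha0 => ?_, fun ha0 => ?_⟩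
  · obtain ⟨hlo, hhi⟩ := pathCount_two_bounds_of_two_le_head ha ha0 (m + 1)
    have hlo' : (cfDenom a (m + 3) : ℝ) ≤ P := by exact_mod_cast hlo
    have hhi' : (P : ℝ) ≤ 3 * cfDenom a (m + 3) := by exact_mod_cast hhi
    constructor <;> linarith
  · obtain ⟨hlo, hhi⟩ := pathCount_two_bounds_of_head_eq_one ha ha0 m
    have hlo' : (cfDenom a (m + 3) : ℝ) ≤ 3 * a 1 * P := by exact_mod_cast hlo
    have hhi' : (a 1 * P : ℝ) ≤ 3 * cfDenom a (m + 3) := by exact_mod_cast hhi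
    rw [div_le_iff₀ ha1, le_div_iff₀ ha1]
    constructor <;> linarith
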